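/- Let W = BSC(p) with 0 < p < 1/2 and V the binary-input binary-output channel with crossover probabilities q0, q1 (transition matrix rows (1−q0, q0) and (q1, 1−q1)) with 0 < q0 = q1 = q < 1/2. If D(W(·|1)‖W(·|0))/D(V(·|1)‖V(·|0)) ≤ D(W_γ‖W_0)/D(V_γ‖V_0) for all γ ∈ (0,1], where W_γ = (1−γ)W(·|0)+γW(·|1) and similarly for V_γ, then for every input distribution P on {0,1}, I(P,W)·D(V(·|1)‖V(·|0)) ≤ I(P,V)·D(W(·|1)‖W(·|0)). -/
import Mathlib


open Finset

/-- Kullback–Leibler divergence between two distributions on a finite alphabet. -/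
noncomputable def klDiv {Z : Type*} [Fintype Z] (p q : Z → ℝ) : ℝ :=
  ∑ z, p z * Real.log (p z / q z)

/-- Mutual information `I(P, W)` of an input distribution `P` through the channel `W`. -/
noncomputable def mutInfo {X Z : Type*} [Fintype X] [Fintype Z]
    (P : X → ℝ) (W : X → Z → ℝ) : ℝ :=
  ∑ x, ∑ z, P x * W x z * Real.log (W x z / (∑ x', P x' * W x' z))

/-- Elementary bound `a - b ≤ a log(a/b)` for positive reals. -/
lemma stmt8_term_ge (a b : ℝ) (ha : 0 < a) (hb : 0 < b) :
    a - b ≤ a * Real.log (a / b) := by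
  have h := Real.log_le_sub_one_of_pos (div_pos hb ha)
  have h2 : Real.log (a / b) = - Real.log (b / a) := by rw [← Real.log_inv, inv_div]
  have h3 : a * (b / a) = b := by field_simp
  rw [h2]
  nlinarith [mul_le_mul_of_nonneg_left h ha.le]

/-- The identity `I(P, BSC(r)) = γ D(W₁‖W₀) − D(W_γ‖W₀)` in explicit form. -/
lemma stmt8_ident (r g : ℝ) (hr0 : 0 < r) (hr1 : r < 1)
    (hs0 : 0 < (1 - g) * (1 - r) + g * r) (hs1 : 0 < (1 - g) * r + g * (1 - r)) :
    (1 - g) * (1 - r) * Real.log ((1 - r) / ((1 - g) * (1 - r) + g * r)) +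
      (1 - g) * r * Real.log (r / ((1 - g) * r + g * (1 - r))) +
      (g * r * Real.log (r / ((1 - g) * (1 - r) + g * r)) +
        g * (1 - r) * Real.log ((1 - r) / ((1 - g) * r + g * (1 - r))))
    = g * (r * Real.log (r / (1 - r)) + (1 - r) * Real.log ((1 - r) / r)) -
      (((1 - g) * (1 - r) + g * r) * Real.log (((1 - g) * (1 - r) + g * r) / (1 - r)) +
        ((1 - g) * r + g * (1 - r)) * Real.log (((1 - g) * r + g * (1 - r)) / r)) := by
  have h1r : (0:ℝ) < 1 - r := by linarith
  rw [Real.log_div h1r.ne' hs0.ne', Real.log_div hr0.ne' hs1.ne',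
      Real.log_div hr0.ne' hs0.ne', Real.log_div h1r.ne' hs1.ne',
      Real.log_div hr0.ne' h1r.ne', Real.log_div h1r.ne' hr0.ne',
      Real.log_div hs0.ne' h1r.ne', Real.log_div hs1.ne' hr0.ne']
  ring

/-- Nonnegativity of the binary KL divergence of the `γ`-mixture. -/
lemma stmt8_kl_nonneg (r g : ℝ) (hr0 : 0 < r) (hr1 : r < 1)
    (hs0 : 0 < (1 - g) * (1 - r) + g * r) (hs1 : 0 < (1 - g) * r + g * (1 - r)) :
    0 ≤ ((1 - g) * (1 - r) + g * r) * Real.log (((1 - g) * (1 - r) + g * r) / (1 - r)) +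
        ((1 - g) * r + g * (1 - r)) * Real.log (((1 - g) * r + g * (1 - r)) / r) := by
  have h1r : (0:ℝ) < 1 - r := by linarith
  have t0 := stmt8_term_ge _ _ hs0 h1r
  have t1 := stmt8_term_ge _ _ hs1 hr0
  linarith

/-- Positivity of `D(W₁‖W₀)` for a BSC with crossover `r < 1/2`. -/
lemma stmt8_div_pos (r : ℝ) (hr0 : 0 < r) (hr : r < 1 / 2) :
    0 < r * Real.log (r / (1 - r)) + (1 - r) * Real.log ((1 - r) / r) := by
  have h1r : (0:ℝ) < 1 - r := by linarith
  have hl : 0 < Real.log ((1 - r) / r) := by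
    apply Real.log_pos
    rw [lt_div_iff₀ hr0]
    linarith
  have h2 : Real.log (r / (1 - r)) = - Real.log ((1 - r) / r) := by
    rw [← Real.log_inv, inv_div]
  rw [h2]
  nlinarith

set_option maxHeartbeats 1000000 in
/-- for `W = BSC(p)` with `0 < p < 1/2` and `V` a binary symmetric channel
with crossover `0 < q < 1/2` (the case `q0 = q1 = q`), the ratio condition on
divergences of `γ`-mixtures implies `I(P,W)·D(V₁‖V₀) ≤ I(P,V)·D(W₁‖W₀)` for every
input distribution `P` on `{0,1}`. -/
theorem stmt8 (p q : ℝ) (hp0 : 0 < p) (hp : p < 1 / 2) (hq0 : 0 < q) (hq : q < 1 / 2)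
    (W V : Fin 2 → Fin 2 → ℝ)
    (hW : W = fun x y => if x = y then 1 - p else p)
    (hV : V = fun x y => if x = y then 1 - q else q)
    (hratio : ∀ γ ∈ Set.Ioc (0 : ℝ) 1,
      klDiv (W 1) (W 0) / klDiv (V 1) (V 0) ≤
        klDiv (fun y => (1 - γ) * W 0 y + γ * W 1 y) (W 0) /
          klDiv (fun y => (1 - γ) * V 0 y + γ * V 1 y) (V 0)) :
    ∀ P : Fin 2 → ℝ, (∀ x, 0 ≤ P x) → (∑ x, P x) = 1 →
      mutInfo P W * klDiv (V 1) (V 0) ≤ mutInfo P V * klDiv (W 1) (W 0) := by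
  subst hW hV
  intro P hP hsum
  have hsum2 : P 0 + P 1 = 1 := by simpa [Fin.sum_univ_two] using hsum
  have hP0 : P 0 = 1 - P 1 := by linarith
  have hγ0 : 0 ≤ P 1 := hP 1
  have hγ1 : P 1 ≤ 1 := by linarith [hP 0]
  have h1p : (0:ℝ) < 1 - p := by linarith
  have h1q : (0:ℝ) < 1 - q := by linarith
  -- positivity of mixture columns
  have hs0w : 0 < (1 - P 1) * (1 - p) + P 1 * p := by nlinarith
  have hs1w : 0 < (1 - P 1) * p + P 1 * (1 - p) := by nlinarith
  have hs0v : 0 < (1 - P 1) * (1 - q) + P 1 * q := by nlinarith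
  have hs1v : 0 < (1 - P 1) * q + P 1 * (1 - q) := by nlinarith
  -- explicit forms of the divergences
  have eDW : klDiv ((fun x y : Fin 2 => if x = y then 1 - p else p) 1)
      ((fun x y : Fin 2 => if x = y then 1 - p else p) 0) =
      p * Real.log (p / (1 - p)) + (1 - p) * Real.log ((1 - p) / p) := by
    simp only [klDiv, Fin.sum_univ_two]; norm_num
  have eDV : klDiv ((fun x y : Fin 2 => if x = y then 1 - q else q) 1)
      ((fun x y : Fin 2 => if x = y then 1 - q else q) 0) =
      q * Real.log (q / (1 - q)) + (1 - q) * Real.log ((1 - q) / q) := by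
    simp only [klDiv, Fin.sum_univ_two]; norm_num
  -- explicit forms of the mutual informations
  have eIW : mutInfo P (fun x y : Fin 2 => if x = y then 1 - p else p) =
      P 1 * (p * Real.log (p / (1 - p)) + (1 - p) * Real.log ((1 - p) / p)) -
      (((1 - P 1) * (1 - p) + P 1 * p) * Real.log (((1 - P 1) * (1 - p) + P 1 * p) / (1 - p)) +
        ((1 - P 1) * p + P 1 * (1 - p)) * Real.log (((1 - P 1) * p + P 1 * (1 - p)) / p)) := by
    simp only [mutInfo, Fin.sum_univ_two]
    norm_num
    rw [hP0]
    exact stmt8_ident p (P 1) hp0 (by linarith) hs0w hs1w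
  have eIV : mutInfo P (fun x y : Fin 2 => if x = y then 1 - q else q) =
      P 1 * (q * Real.log (q / (1 - q)) + (1 - q) * Real.log ((1 - q) / q)) -
      (((1 - P 1) * (1 - q) + P 1 * q) * Real.log (((1 - P 1) * (1 - q) + P 1 * q) / (1 - q)) +
        ((1 - P 1) * q + P 1 * (1 - q)) * Real.log (((1 - P 1) * q + P 1 * (1 - q)) / q)) := by
    simp only [mutInfo, Fin.sum_univ_two]
    norm_num
    rw [hP0]
    exact stmt8_ident q (P 1) hq0 (by linarith) hs0v hs1v
  have hDW := stmt8_div_pos p hp0 hp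
  have hDV := stmt8_div_pos q hq0 hq
  have hGw := stmt8_kl_nonneg p (P 1) hp0 (by linarith) hs0w hs1w
  have hGv := stmt8_kl_nonneg q (P 1) hq0 (by linarith) hs0v hs1v
  rw [eIW, eIV, eDW, eDV]
  rcases eq_or_lt_of_le hγ0 with hz | hpos
  · -- γ = 0 : both mixtures equal the base distributions, everything vanishes
    rw [← hz]
    have e1 : ((1 - 0) * (1 - p) + 0 * p) = 1 - p := by ring
    have e2 : ((1 - 0) * p + 0 * (1 - p)) = p := by ring
    have e3 : ((1 - 0) * (1 - q) + 0 * q) = 1 - q := by ring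
    have e4 : ((1 - 0) * q + 0 * (1 - q)) = q := by ring
    rw [e1, e2, e3, e4, div_self h1p.ne', div_self hp0.ne', div_self h1q.ne',
      div_self hq0.ne', Real.log_one]
    ring_nf
    norm_num
  · -- γ > 0 : use the ratio hypothesis
    have hr := hratio (P 1) ⟨hpos, hγ1⟩
    simp only [klDiv, Fin.sum_univ_two] at hr
    norm_num at hr
    -- cross-multiplied form
    have cross : (p * Real.log (p / (1 - p)) + (1 - p) * Real.log ((1 - p) / p)) *
        (((1 - P 1) * (1 - q) + P 1 * q) * Real.log (((1 - P 1) * (1 - q) + P 1 * q) / (1 - q)) +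
          ((1 - P 1) * q + P 1 * (1 - q)) * Real.log (((1 - P 1) * q + P 1 * (1 - q)) / q)) ≤
        (((1 - P 1) * (1 - p) + P 1 * p) * Real.log (((1 - P 1) * (1 - p) + P 1 * p) / (1 - p)) +
          ((1 - P 1) * p + P 1 * (1 - p)) * Real.log (((1 - P 1) * p + P 1 * (1 - p)) / p)) *
        (q * Real.log (q / (1 - q)) + (1 - q) * Real.log ((1 - q) / q)) := by
      rcases eq_or_lt_of_le hGv with hGv0 | hGv0
      · rw [← hGv0]
        nlinarith
      · rw [div_le_div_iff₀ hDV hGv0] at hr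
        exact hr
    nlinarith [cross]
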